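/- Let θ : ℝ → ℝ⁹ be a differentiable solution of the oscillator system such that for all t ∈ ℝ, θ_{1,1}(t) = θ_{1,2}(t) = θ_{1,3}(t) (population 1 phase-synchronized) and θ_{2,2}(t) = θ_{2,1}(t) + 2π/3, θ_{2,3}(t) = θ_{2,1}(t) + 4π/3 (population 2 in splay phase). If the asymptotic average frequencies Ω_σ = lim_{T→∞} (θ_{σ,1}(T) − θ_{σ,1}(0))/T exist for σ = 1, 2, then |Ω₁ − Ω₂| ≥ 3 − (4/3)K. In particular, if 4K < 9 then Ω₁ ≠ Ω₂ (localized frequency synchrony). -/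

import Mathlib

open Real Filter

/-- Pairwise coupling function within populations (N = 3 case, `α₂ = π/2`). -/
noncomputable def g2 (r a₂ : ℝ) (ϑ : ℝ) : ℝ :=
  sin (ϑ + π / 2) - r * (a₂ * sin (2 * (ϑ + π / 2)) + sin (6 * (ϑ + π / 2)))

/-- Nonpairwise coupling function between populations (`α₄ = π`). -/
noncomputable def g4 (ϑ : ℝ) : ℝ := sin (ϑ + π)

/-- Mean-field style interaction term `G₄(θ_τ; φ)` for populations of three oscillators. -/
noncomputable def G4 (θτ : Fin 3 → ℝ) (φ : ℝ) : ℝ :=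
  (1 / 9) * ∑ m : Fin 3, ∑ n : Fin 3, g4 (θτ m - θτ n + φ)

lemma sum_sin_sub (f : Fin 3 → ℝ) :
    ∑ m : Fin 3, ∑ n : Fin 3, Real.sin (f m - f n) = 0 := by
  have h01 : Real.sin (f 1 - f 0) = - Real.sin (f 0 - f 1) := by
    rw [← Real.sin_neg]; ring_nf
  have h02 : Real.sin (f 2 - f 0) = - Real.sin (f 0 - f 2) := by
    rw [← Real.sin_neg]; ring_nf
  have h12 : Real.sin (f 2 - f 1) = - Real.sin (f 1 - f 2) := by
    rw [← Real.sin_neg]; ring_nf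
  simp only [Fin.sum_univ_three, sub_self, Real.sin_zero]
  linarith

lemma sin_sum3 (x : ℝ) : Real.sin (x + 2 * π / 3) + Real.sin (x + 4 * π / 3) = - Real.sin x := by
  have c1 : Real.cos (2 * π / 3) = -(1 / 2) := by
    rw [show (2 * π / 3 : ℝ) = π - π / 3 by ring, Real.cos_pi_sub, Real.cos_pi_div_three]
  have s1 : Real.sin (2 * π / 3) = Real.sqrt 3 / 2 := by
    rw [show (2 * π / 3 : ℝ) = π - π / 3 by ring, Real.sin_pi_sub, Real.sin_pi_div_three]
  have c2 : Real.cos (4 * π / 3) = -(1 / 2) := by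
    rw [show (4 * π / 3 : ℝ) = π / 3 + π by ring, Real.cos_add_pi, Real.cos_pi_div_three]
  have s2 : Real.sin (4 * π / 3) = -(Real.sqrt 3 / 2) := by
    rw [show (4 * π / 3 : ℝ) = π / 3 + π by ring, Real.sin_add_pi, Real.sin_pi_div_three]
  rw [Real.sin_add, Real.sin_add, c1, s1, c2, s2]; ring

lemma G4_zero (f : Fin 3 → ℝ) : G4 f 0 = 0 := by
  unfold G4 g4
  have h : ∑ m : Fin 3, ∑ n : Fin 3, Real.sin (f m - f n + 0 + π) = 0 := by
    simp only [add_zero, Real.sin_add_pi, Finset.sum_neg_distrib, sum_sin_sub f, neg_zero]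
  rw [h, mul_zero]

lemma G4_sum (f : Fin 3 → ℝ) : G4 f (2 * π / 3) + G4 f (4 * π / 3) = 0 := by
  have key : ∀ x : ℝ, Real.sin (x + 2 * π / 3 + π) + Real.sin (x + 4 * π / 3 + π)
      = Real.sin x := by
    intro x
    rw [show x + 2 * π / 3 + π = (x + π) + 2 * π / 3 by ring,
      show x + 4 * π / 3 + π = (x + π) + 4 * π / 3 by ring, sin_sum3, Real.sin_add_pi]
    ring
  unfold G4 g4
  have h : (∑ m : Fin 3, ∑ n : Fin 3, Real.sin (f m - f n + 2 * π / 3 + π))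
      + (∑ m : Fin 3, ∑ n : Fin 3, Real.sin (f m - f n + 4 * π / 3 + π))
      = ∑ m : Fin 3, ∑ n : Fin 3, Real.sin (f m - f n) := by
    rw [← Finset.sum_add_distrib]
    refine Finset.sum_congr rfl fun m _ => ?_
    rw [← Finset.sum_add_distrib]
    exact Finset.sum_congr rfl fun n _ => key _
  rw [← mul_add, h, sum_sin_sub, mul_zero]

lemma g2_zero (r a₂ : ℝ) : g2 r a₂ 0 = 1 := by
  unfold g2
  rw [show (0 : ℝ) + π / 2 = π / 2 by ring, show (2 : ℝ) * (π / 2) = π by ring,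
    show (6 : ℝ) * (π / 2) = π + 2 * π by ring, Real.sin_add_two_pi, Real.sin_pi,
    Real.sin_pi_div_two]
  ring

lemma g2_sum (r a₂ : ℝ) : g2 r a₂ (2 * π / 3) + g2 r a₂ (4 * π / 3) = -1 := by
  unfold g2
  rw [show (2 : ℝ) * (2 * π / 3 + π / 2) = π / 3 + 2 * π by ring,
    show (6 : ℝ) * (2 * π / 3 + π / 2) = π + (3 : ℤ) * (2 * π) by push_cast; ring,
    show (2 : ℝ) * (4 * π / 3 + π / 2) = -(π / 3) + (2 : ℤ) * (2 * π) by push_cast; ring,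
    show (6 : ℝ) * (4 * π / 3 + π / 2) = π + (5 : ℤ) * (2 * π) by push_cast; ring,
    show 2 * π / 3 + π / 2 = π / 6 + π by ring,
    show 4 * π / 3 + π / 2 = -(π / 6) + 2 * π by ring,
    Real.sin_add_pi, Real.sin_pi_div_six, Real.sin_add_two_pi, Real.sin_add_two_pi,
    Real.sin_add_int_mul_two_pi, Real.sin_add_int_mul_two_pi, Real.sin_add_int_mul_two_pi,
    Real.sin_pi, Real.sin_neg, Real.sin_neg, Real.sin_pi_div_six, Real.sin_pi_div_three]
  ring

lemma lin_of_const_deriv (f : ℝ → ℝ) (c : ℝ) (hf : ∀ t, HasDerivAt f c t) (T : ℝ) :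
    f T - f 0 = c * T := by
  have h : ∀ t, HasDerivAt (fun s => f s - c * s) 0 t := fun t => by
    have h' := (hf t).sub ((hasDerivAt_id t).const_mul c)
    simp only [mul_one, sub_self] at h'
    exact h'
  have hconst := is_const_of_deriv_eq_zero (fun t => (h t).differentiableAt)
    (fun t => (h t).deriv) T 0
  simp only [mul_zero] at hconst
  linarith

/-- If population 1 is phase synchronized and population 2 is in splay phase, then
the asymptotic average frequencies of the two populations, if they exist, differ by
at least `3 − (4/3)K`; in particular they are distinct whenever `4K < 9`. -/
theorem localized_frequency_synchrony_N3
    (ω r a₂ K : ℝ) (hK : 0 ≤ K)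
    (θ : Fin 3 → Fin 3 → ℝ → ℝ)
    (hode : ∀ (σ : Fin 3) (k : Fin 3) (t : ℝ),
      HasDerivAt (θ σ k)
        (ω + ∑ j ∈ Finset.univ \ {k},
          (g2 r a₂ (θ σ j t - θ σ k t)
            - K * G4 (fun m => θ (σ - 1) m t) (θ σ j t - θ σ k t)
            + K * G4 (fun m => θ (σ + 1) m t) (θ σ j t - θ σ k t))) t)
    (hsync : ∀ t : ℝ, θ 0 0 t = θ 0 1 t ∧ θ 0 1 t = θ 0 2 t)
    (hsplay : ∀ t : ℝ, θ 1 1 t = θ 1 0 t + 2 * π / 3 ∧ θ 1 2 t = θ 1 0 t + 4 * π / 3)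
    (Ω₁ Ω₂ : ℝ)
    (hΩ₁ : Tendsto (fun T : ℝ => (θ 0 0 T - θ 0 0 0) / T) atTop (nhds Ω₁))
    (hΩ₂ : Tendsto (fun T : ℝ => (θ 1 0 T - θ 1 0 0) / T) atTop (nhds Ω₂)) :
    |Ω₁ - Ω₂| ≥ 3 - (4 / 3) * K ∧ (4 * K < 9 → Ω₁ ≠ Ω₂) := by
  have hset : (Finset.univ \ {(0 : Fin 3)}) = {1, 2} := by decide
  have hne : (1 : Fin 3) ≠ 2 := by decide
  -- population 1 has constant frequency ω + 2
  have hd1 : ∀ t, HasDerivAt (θ 0 0) (ω + 2) t := by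
    intro t
    have h := hode 0 0 t
    have e1 : θ 0 1 t - θ 0 0 t = 0 := by have := hsync t; linarith [this.1]
    have e2 : θ 0 2 t - θ 0 0 t = 0 := by have := hsync t; linarith [this.1, this.2]
    have h2 : (ω + ∑ j ∈ Finset.univ \ {(0 : Fin 3)},
        (g2 r a₂ (θ 0 j t - θ 0 0 t)
          - K * G4 (fun m => θ (0 - 1) m t) (θ 0 j t - θ 0 0 t)
          + K * G4 (fun m => θ (0 + 1) m t) (θ 0 j t - θ 0 0 t))) = ω + 2 := by
      rw [hset, Finset.sum_pair hne, e1, e2]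
      have hg := g2_zero r a₂
      have hA := G4_zero (fun m => θ (0 - 1) m t)
      have hB := G4_zero (fun m => θ (0 + 1) m t)
      linear_combination 2 * hg - 2 * K * hA + 2 * K * hB
    exact h2 ▸ h
  -- population 2 has constant frequency ω - 1
  have hd2 : ∀ t, HasDerivAt (θ 1 0) (ω - 1) t := by
    intro t
    have h := hode 1 0 t
    have e1 : θ 1 1 t - θ 1 0 t = 2 * π / 3 := by have := hsplay t; linarith [this.1]
    have e2 : θ 1 2 t - θ 1 0 t = 4 * π / 3 := by have := hsplay t; linarith [this.2]
    have h2 : (ω + ∑ j ∈ Finset.univ \ {(0 : Fin 3)},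
        (g2 r a₂ (θ 1 j t - θ 1 0 t)
          - K * G4 (fun m => θ (1 - 1) m t) (θ 1 j t - θ 1 0 t)
          + K * G4 (fun m => θ (1 + 1) m t) (θ 1 j t - θ 1 0 t))) = ω - 1 := by
      rw [hset, Finset.sum_pair hne, e1, e2]
      have hg := g2_sum r a₂
      have hA := G4_sum (fun m => θ (1 - 1) m t)
      have hB := G4_sum (fun m => θ (1 + 1) m t)
      linear_combination hg - K * hA + K * hB
    exact h2 ▸ h
  have key : ∀ (f : ℝ → ℝ) (c Ω : ℝ), (∀ t, HasDerivAt f c t) →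
      Tendsto (fun T : ℝ => (f T - f 0) / T) atTop (nhds Ω) → Ω = c := by
    intro f c Ω hf hΩ
    have heq : (fun T : ℝ => (f T - f 0) / T) =ᶠ[atTop] (fun _ => c) := by
      filter_upwards [eventually_gt_atTop (0 : ℝ)] with T hT
      rw [lin_of_const_deriv f c hf T, mul_div_assoc, div_self hT.ne', mul_one]
    exact tendsto_nhds_unique hΩ (tendsto_const_nhds.congr' heq.symm)
  have h1 : Ω₁ = ω + 2 := key _ _ _ hd1 hΩ₁
  have h2 : Ω₂ = ω - 1 := key _ _ _ hd2 hΩ₂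
  have habs : |Ω₁ - Ω₂| = 3 := by
    rw [h1, h2, show ω + 2 - (ω - 1) = 3 by ring]
    norm_num
  refine ⟨by rw [habs]; linarith, fun _ => by rw [h1, h2]; intro h; linarith⟩
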